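/- arXiv:2106.06810 — 3 statements merged into one kernel-verified Lean document; each statement's English description precedes it below -/
import Mathlib

section
/- Let κ be a field with char(κ) ≠ 2 and let a,b,c,d,e,f,g ∈ κ. Let x be the 8×8 matrix over κ whose nonzero entries are: row 1 equal to (0, a, b, c, d, e, f, g); x₂₇ = 1 and x₂₈ = f; x₃₄ = 1 and x₃₈ = e; x₄₅ = 1 and x₄₈ = d; x₅₆ = −1 and x₅₈ = −c; x₆₈ = −b; x₇₈ = −a. Then x does not have Jordan type [6,1,1]; that is, it is not the case that both x⁵ ≠ 0 and rank(x) = 5. -/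
/-- The 8×8 matrix with first row (0,a,b,c,d,e,f,g), x₂₇ = 1, x₂₈ = f, x₃₄ = 1, x₃₈ = e,
x₄₅ = 1, x₄₈ = d, x₅₆ = −1, x₅₈ = −c, x₆₈ = −b, x₇₈ = −a, and all other entries 0. -/
def xmat8 (κ : Type*) [Field κ] (a b c d e f g : κ) : Matrix (Fin 8) (Fin 8) κ :=
  !![0,a,b,c,d,e,f,g;
     0,0,0,0,0,0,1,f;
     0,0,0,1,0,0,0,e;
     0,0,0,0,1,0,0,d;
     0,0,0,0,0,-1,0,-c;
     0,0,0,0,0,0,0,-b;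
     0,0,0,0,0,0,0,-a;
     0,0,0,0,0,0,0,0]

section vecHelpers
variable {α : Type*}
@[simp] lemma vec8_app0 (x0 x1 x2 x3 x4 x5 x6 x7 : α) : ![x0,x1,x2,x3,x4,x5,x6,x7] (0 : Fin 8) = x0 := rfl
@[simp] lemma vec8_app1 (x0 x1 x2 x3 x4 x5 x6 x7 : α) : ![x0,x1,x2,x3,x4,x5,x6,x7] (1 : Fin 8) = x1 := rfl
@[simp] lemma vec8_app2 (x0 x1 x2 x3 x4 x5 x6 x7 : α) : ![x0,x1,x2,x3,x4,x5,x6,x7] (2 : Fin 8) = x2 := rfl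
@[simp] lemma vec8_app3 (x0 x1 x2 x3 x4 x5 x6 x7 : α) : ![x0,x1,x2,x3,x4,x5,x6,x7] (3 : Fin 8) = x3 := rfl
@[simp] lemma vec8_app4 (x0 x1 x2 x3 x4 x5 x6 x7 : α) : ![x0,x1,x2,x3,x4,x5,x6,x7] (4 : Fin 8) = x4 := rfl
@[simp] lemma vec8_app5 (x0 x1 x2 x3 x4 x5 x6 x7 : α) : ![x0,x1,x2,x3,x4,x5,x6,x7] (5 : Fin 8) = x5 := rfl
@[simp] lemma vec8_app6 (x0 x1 x2 x3 x4 x5 x6 x7 : α) : ![x0,x1,x2,x3,x4,x5,x6,x7] (6 : Fin 8) = x6 := rfl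
@[simp] lemma vec8_app7 (x0 x1 x2 x3 x4 x5 x6 x7 : α) : ![x0,x1,x2,x3,x4,x5,x6,x7] (7 : Fin 8) = x7 := rfl
@[simp] lemma vec8_mk0 (h : (0:ℕ) < 8) (x0 x1 x2 x3 x4 x5 x6 x7 : α) : ![x0,x1,x2,x3,x4,x5,x6,x7] ⟨0,h⟩ = x0 := rfl
@[simp] lemma vec8_mk1 (h : (1:ℕ) < 8) (x0 x1 x2 x3 x4 x5 x6 x7 : α) : ![x0,x1,x2,x3,x4,x5,x6,x7] ⟨1,h⟩ = x1 := rfl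
@[simp] lemma vec8_mk2 (h : (2:ℕ) < 8) (x0 x1 x2 x3 x4 x5 x6 x7 : α) : ![x0,x1,x2,x3,x4,x5,x6,x7] ⟨2,h⟩ = x2 := rfl
@[simp] lemma vec8_mk3 (h : (3:ℕ) < 8) (x0 x1 x2 x3 x4 x5 x6 x7 : α) : ![x0,x1,x2,x3,x4,x5,x6,x7] ⟨3,h⟩ = x3 := rfl
@[simp] lemma vec8_mk4 (h : (4:ℕ) < 8) (x0 x1 x2 x3 x4 x5 x6 x7 : α) : ![x0,x1,x2,x3,x4,x5,x6,x7] ⟨4,h⟩ = x4 := rfl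
@[simp] lemma vec8_mk5 (h : (5:ℕ) < 8) (x0 x1 x2 x3 x4 x5 x6 x7 : α) : ![x0,x1,x2,x3,x4,x5,x6,x7] ⟨5,h⟩ = x5 := rfl
@[simp] lemma vec8_mk6 (h : (6:ℕ) < 8) (x0 x1 x2 x3 x4 x5 x6 x7 : α) : ![x0,x1,x2,x3,x4,x5,x6,x7] ⟨6,h⟩ = x6 := rfl
@[simp] lemma vec8_mk7 (h : (7:ℕ) < 8) (x0 x1 x2 x3 x4 x5 x6 x7 : α) : ![x0,x1,x2,x3,x4,x5,x6,x7] ⟨7,h⟩ = x7 := rfl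
@[simp] lemma vec6_app0 (x0 x1 x2 x3 x4 x5 : α) : ![x0,x1,x2,x3,x4,x5] (0 : Fin 6) = x0 := rfl
@[simp] lemma vec6_app1 (x0 x1 x2 x3 x4 x5 : α) : ![x0,x1,x2,x3,x4,x5] (1 : Fin 6) = x1 := rfl
@[simp] lemma vec6_app2 (x0 x1 x2 x3 x4 x5 : α) : ![x0,x1,x2,x3,x4,x5] (2 : Fin 6) = x2 := rfl
@[simp] lemma vec6_app3 (x0 x1 x2 x3 x4 x5 : α) : ![x0,x1,x2,x3,x4,x5] (3 : Fin 6) = x3 := rfl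
@[simp] lemma vec6_app4 (x0 x1 x2 x3 x4 x5 : α) : ![x0,x1,x2,x3,x4,x5] (4 : Fin 6) = x4 := rfl
@[simp] lemma vec6_app5 (x0 x1 x2 x3 x4 x5 : α) : ![x0,x1,x2,x3,x4,x5] (5 : Fin 6) = x5 := rfl
@[simp] lemma vec6_mk0 (h : (0:ℕ) < 6) (x0 x1 x2 x3 x4 x5 : α) : ![x0,x1,x2,x3,x4,x5] ⟨0,h⟩ = x0 := rfl
@[simp] lemma vec6_mk1 (h : (1:ℕ) < 6) (x0 x1 x2 x3 x4 x5 : α) : ![x0,x1,x2,x3,x4,x5] ⟨1,h⟩ = x1 := rfl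
@[simp] lemma vec6_mk2 (h : (2:ℕ) < 6) (x0 x1 x2 x3 x4 x5 : α) : ![x0,x1,x2,x3,x4,x5] ⟨2,h⟩ = x2 := rfl
@[simp] lemma vec6_mk3 (h : (3:ℕ) < 6) (x0 x1 x2 x3 x4 x5 : α) : ![x0,x1,x2,x3,x4,x5] ⟨3,h⟩ = x3 := rfl
@[simp] lemma vec6_mk4 (h : (4:ℕ) < 6) (x0 x1 x2 x3 x4 x5 : α) : ![x0,x1,x2,x3,x4,x5] ⟨4,h⟩ = x4 := rfl
@[simp] lemma vec6_mk5 (h : (5:ℕ) < 6) (x0 x1 x2 x3 x4 x5 : α) : ![x0,x1,x2,x3,x4,x5] ⟨5,h⟩ = x5 := rfl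
end vecHelpers

section xmatHelpers

variable {κ : Type*} [Field κ] (a b c d e f g : κ)

set_option maxHeartbeats 3000000 in
lemma xmat8_sq : xmat8 κ a b c d e f g * xmat8 κ a b c d e f g =
    !![0,0,0,b,c,-d,a,0;
       0,0,0,0,0,0,0,-a;
       0,0,0,0,1,0,0,d;
       0,0,0,0,0,-1,0,-c;
       0,0,0,0,0,0,0,b;
       0,0,0,0,0,0,0,0;
       0,0,0,0,0,0,0,0;
       0,0,0,0,0,0,0,0] := by
  ext i j
  rw [Matrix.mul_apply, Fin.sum_univ_eight]
  fin_cases i <;> fin_cases j <;>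
    simp only [xmat8, Matrix.of_apply, vec8_app0, vec8_app1, vec8_app2, vec8_app3,
      vec8_app4, vec8_app5, vec8_app6, vec8_app7, vec8_mk0, vec8_mk1, vec8_mk2, vec8_mk3,
      vec8_mk4, vec8_mk5, vec8_mk6, vec8_mk7] <;> ring

set_option maxHeartbeats 3000000 in
lemma xmat8_pow5 : xmat8 κ a b c d e f g ^ 5 =
    !![0,0,0,0,0,0,0,b*b;
       0,0,0,0,0,0,0,0;
       0,0,0,0,0,0,0,0;
       0,0,0,0,0,0,0,0;
       0,0,0,0,0,0,0,0;
       0,0,0,0,0,0,0,0;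
       0,0,0,0,0,0,0,0;
       0,0,0,0,0,0,0,0] := by
  have h5 : xmat8 κ a b c d e f g ^ 5 =
      (xmat8 κ a b c d e f g * xmat8 κ a b c d e f g) *
        (xmat8 κ a b c d e f g * xmat8 κ a b c d e f g) * xmat8 κ a b c d e f g := by
    rw [show (5 : ℕ) = 2 + 2 + 1 from rfl, pow_add, pow_add, pow_two, pow_one]
  rw [h5, xmat8_sq]
  have h4 : !![(0:κ),0,0,b,c,-d,a,0;
       0,0,0,0,0,0,0,-a;
       0,0,0,0,1,0,0,d;
       0,0,0,0,0,-1,0,-c;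
       0,0,0,0,0,0,0,b;
       0,0,0,0,0,0,0,0;
       0,0,0,0,0,0,0,0;
       0,0,0,0,0,0,0,0] * !![(0:κ),0,0,b,c,-d,a,0;
       0,0,0,0,0,0,0,-a;
       0,0,0,0,1,0,0,d;
       0,0,0,0,0,-1,0,-c;
       0,0,0,0,0,0,0,b;
       0,0,0,0,0,0,0,0;
       0,0,0,0,0,0,0,0;
       0,0,0,0,0,0,0,0] =
      !![0,0,0,0,0,-b,0,0;
         0,0,0,0,0,0,0,0;
         0,0,0,0,0,0,0,b;
         0,0,0,0,0,0,0,0;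
         0,0,0,0,0,0,0,0;
         0,0,0,0,0,0,0,0;
         0,0,0,0,0,0,0,0;
         0,0,0,0,0,0,0,0] := by
    ext i j
    rw [Matrix.mul_apply, Fin.sum_univ_eight]
    fin_cases i <;> fin_cases j <;>
      simp only [Matrix.of_apply, vec8_app0, vec8_app1, vec8_app2, vec8_app3,
        vec8_app4, vec8_app5, vec8_app6, vec8_app7, vec8_mk0, vec8_mk1, vec8_mk2, vec8_mk3,
        vec8_mk4, vec8_mk5, vec8_mk6, vec8_mk7] <;> ring
  rw [h4]
  ext i j
  rw [Matrix.mul_apply, Fin.sum_univ_eight]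
  fin_cases i <;> fin_cases j <;>
    simp only [xmat8, Matrix.of_apply, vec8_app0, vec8_app1, vec8_app2, vec8_app3,
      vec8_app4, vec8_app5, vec8_app6, vec8_app7, vec8_mk0, vec8_mk1, vec8_mk2, vec8_mk3,
      vec8_mk4, vec8_mk5, vec8_mk6, vec8_mk7] <;> ring

end xmatHelpers

set_option maxHeartbeats 4000000 in
/-- No matrix of this family has Jordan type [6,1,1]: it cannot have both x⁵ ≠ 0 and
rank x = 5. -/
theorem stmt9 (κ : Type*) [Field κ] (h2 : (2 : κ) ≠ 0) (a b c d e f g : κ) :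
    ¬ ((xmat8 κ a b c d e f g) ^ 5 ≠ 0 ∧ (xmat8 κ a b c d e f g).rank = 5) := by
  rintro ⟨h5, hr⟩
  set x := xmat8 κ a b c d e f g with hx
  have hb : b ≠ 0 := by
    rintro rfl
    apply h5
    rw [hx, xmat8_pow5]
    ext i j
    rw [Matrix.zero_apply]
    fin_cases i <;> fin_cases j <;>
      simp only [Matrix.of_apply, vec8_mk0, vec8_mk1, vec8_mk2, vec8_mk3,
        vec8_mk4, vec8_mk5, vec8_mk6, vec8_mk7] <;> ring
  set B : Matrix (Fin 6) (Fin 8) κ :=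
    !![1,0,0,0,0,0,0,0;
       0,1,0,0,0,0,0,0;
       0,0,1,0,0,0,0,0;
       0,0,0,1,0,0,0,0;
       0,0,0,0,1,0,0,0;
       0,0,0,0,0,1,0,0] with hB
  set C : Matrix (Fin 8) (Fin 6) κ :=
    !![0,0,0,0,0,0;
       0,0,0,0,0,0;
       1,0,0,0,0,0;
       0,0,1,0,0,0;
       0,0,0,1,0,0;
       0,0,0,0,1,0;
       0,1,0,0,0,0;
       0,0,0,0,0,1] with hC
  set N : Matrix (Fin 6) (Fin 6) κ :=
    !![1/b, -(f/b), -(c/b), -(d/b), e/b, (g - f*f - d*d - 2*(c*e))/(b*b);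
       0,1,0,0,0,f/b;
       0,0,1,0,0,e/b;
       0,0,0,1,0,d/b;
       0,0,0,0,-1,c/b;
       0,0,0,0,0,-(1/b)] with hN
  have hxC : x * C = !![b,f,c,d,e,g;
       0,1,0,0,0,f;
       0,0,1,0,0,e;
       0,0,0,1,0,d;
       0,0,0,0,-1,-c;
       0,0,0,0,0,-b;
       0,0,0,0,0,-a;
       0,0,0,0,0,0] := by
    ext i j
    rw [Matrix.mul_apply, Fin.sum_univ_eight]
    fin_cases i <;> fin_cases j <;>
      simp only [hx, hC, xmat8, Matrix.of_apply, vec8_app0, vec8_app1, vec8_app2, vec8_app3,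
        vec8_app4, vec8_app5, vec8_app6, vec8_app7, vec8_mk0, vec8_mk1, vec8_mk2, vec8_mk3,
        vec8_mk4, vec8_mk5, vec8_mk6, vec8_mk7, vec6_app0, vec6_app1, vec6_app2, vec6_app3,
        vec6_app4, vec6_app5, vec6_mk0, vec6_mk1, vec6_mk2, vec6_mk3, vec6_mk4, vec6_mk5] <;>
      ring
  have hM : B * (x * C) =
      !![b,f,c,d,e,g;
         0,1,0,0,0,f;
         0,0,1,0,0,e;
         0,0,0,1,0,d;
         0,0,0,0,-1,-c;
         0,0,0,0,0,-b] := by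
    rw [hxC]
    ext i j
    rw [Matrix.mul_apply, Fin.sum_univ_eight]
    fin_cases i <;> fin_cases j <;>
      simp only [hB, Matrix.of_apply, vec8_app0, vec8_app1, vec8_app2, vec8_app3,
        vec8_app4, vec8_app5, vec8_app6, vec8_app7, vec8_mk0, vec8_mk1, vec8_mk2, vec8_mk3,
        vec8_mk4, vec8_mk5, vec8_mk6, vec8_mk7, vec6_app0, vec6_app1, vec6_app2, vec6_app3,
        vec6_app4, vec6_app5, vec6_mk0, vec6_mk1, vec6_mk2, vec6_mk3, vec6_mk4, vec6_mk5] <;>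
      ring
  have hbb : b * b ≠ 0 := mul_ne_zero hb hb
  have hMN : B * (x * C) * N = 1 := by
    rw [hM]
    ext i j
    rw [Matrix.mul_apply, Fin.sum_univ_six]
    fin_cases i <;> fin_cases j <;>
      simp only [hN, Matrix.of_apply, Matrix.one_apply, vec6_app0, vec6_app1, vec6_app2,
        vec6_app3, vec6_app4, vec6_app5, vec6_mk0, vec6_mk1, vec6_mk2, vec6_mk3, vec6_mk4,
        vec6_mk5, Fin.mk.injEq] <;> norm_num <;> (try field_simp) <;> (try ring) <;> (try field_simp)
  have h6 : (6 : ℕ) ≤ x.rank := by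
    have h1 : ((1 : Matrix (Fin 6) (Fin 6) κ)).rank = 6 := by
      rw [Matrix.rank_one, Fintype.card_fin]
    calc (6 : ℕ) = (B * (x * C) * N).rank := by rw [hMN, h1]
      _ ≤ (B * (x * C)).rank := Matrix.rank_mul_le_left _ _
      _ ≤ (x * C).rank := Matrix.rank_mul_le_right _ _
      _ ≤ x.rank := Matrix.rank_mul_le_left _ _
  rw [hr] at h6
  omega
end

section
/- Let n, m be natural numbers. The partition [2m, 2m−2] of 4m−2 satisfies the symplectic condition (every odd part appears with even multiplicity), and so does [2m−1, 2m−1]. Moreover [2m, 2m−2] strictly dominates [2m−1, 2m−1] in the dominance order, and the two partitions are adjacent: there is no symplectic partition strictly between them. -/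
/-- A (decreasingly sorted) list of positive naturals summing to N. -/
def IsPartitionOf (N : ℕ) (p : List ℕ) : Prop :=
  p.Pairwise (· ≥ ·) ∧ (∀ x ∈ p, 0 < x) ∧ p.sum = N

/-- Symplectic condition: every odd part appears with even multiplicity. -/
def SympPart (p : List ℕ) : Prop := ∀ a ∈ p, Odd a → Even (p.count a)

/-- Dominance order on partitions (written as lists, compared via partial sums of
initial segments; trailing parts padded by zeros implicitly). -/
def Dominates (p q : List ℕ) : Prop := ∀ j : ℕ, (q.take j).sum ≤ (p.take j).sum

/-!
The first partial sum of a partition `q` between `[2m-1, 2m-1]` and `[2m, 2m-2]` is `2m-1` or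
`2m`, and its second partial sum is already the whole of `4m-2`. Since parts are positive, `q`
has exactly two parts, so it is one of the two endpoints.
-/

theorem dominates_pair_iff {a b c d : ℕ} : Dominates [a, b] [c, d] ↔ c ≤ a ∧ c + d ≤ a + b := by
  refine ⟨fun h => ⟨by simpa using h 1, by simpa using h 2⟩, fun ⟨h₁, h₂⟩ j => ?_⟩
  match j with
  | 0 => simp
  | 1 => simpa using h₁
  | j + 2 => simpa using h₂

theorem isPartitionOf_pair_iff {N a b : ℕ} :
    IsPartitionOf N [a, b] ↔ b ≤ a ∧ 0 < b ∧ a + b = N := by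
  simp only [IsPartitionOf, List.pairwise_pair, List.mem_pair, forall_eq_or_imp, forall_eq,
    List.sum_pair]
  omega

theorem sympPart_of_forall_even {p : List ℕ} (h : ∀ a ∈ p, Even a) : SympPart p :=
  fun a ha hodd => absurd (h a ha) (Nat.not_even_iff_odd.2 hodd)

theorem sympPart_pair_self (a : ℕ) : SympPart [a, a] := fun _ ha _ => by
  simp_all

theorem IsPartitionOf.length_le {N k : ℕ} {q : List ℕ} (hq : IsPartitionOf N q)
    (hk : N ≤ (q.take k).sum) : q.length ≤ k := by
  obtain ⟨-, hpos, hsum⟩ := hq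
  have hdrop : (q.drop k).sum = 0 := by
    have := q.sum_take_add_sum_drop k
    omega
  have : q.drop k = [] := by
    rw [List.sum_eq_zero_iff] at hdrop
    exact List.eq_nil_iff_forall_not_mem.2 fun x hx =>
      (hpos x (List.mem_of_mem_drop hx)).ne' (hdrop x hx)
  simpa using this

theorem eq_of_dominates_of_dominated {m : ℕ} (hm : 2 ≤ m) {q : List ℕ}
    (hq : IsPartitionOf (4 * m - 2) q) (hup : Dominates [2 * m, 2 * m - 2] q)
    (hlow : Dominates q [2 * m - 1, 2 * m - 1]) :
    q = [2 * m, 2 * m - 2] ∨ q = [2 * m - 1, 2 * m - 1] := by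
  have hhead_le := hup 1
  have hhead_ge := hlow 1
  have htwo := hlow 2
  have hsum := hq.2.2
  simp only [List.take_succ_cons, List.take_zero, List.take_nil, List.sum_cons, List.sum_nil,
    add_zero] at hhead_le hhead_ge htwo
  have hlen : q.length ≤ 2 := hq.length_le (by omega)
  match q with
  | [] => simp only [List.sum_nil] at hsum; omega
  | [a] =>
    simp only [List.sum_cons, List.sum_nil, add_zero, List.take_succ_cons, List.take_zero]
      at hsum hhead_le
    omega
  | [a, b] =>
    simp only [List.take_succ_cons, List.take_zero, List.sum_cons, List.sum_nil, add_zero,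
      List.cons.injEq, and_true] at hsum hhead_le hhead_ge ⊢
    omega
  | _ :: _ :: _ :: _ => simp at hlen

/-- [2m, 2m−2] and [2m−1, 2m−1] are symplectic partitions of 4m−2, the first strictly
dominates the second, and they are adjacent: no symplectic partition lies strictly
between them in the dominance order. -/
theorem stmt17 (m : ℕ) (hm : 2 ≤ m) :
    IsPartitionOf (4 * m - 2) [2 * m, 2 * m - 2] ∧ SympPart [2 * m, 2 * m - 2] ∧
    IsPartitionOf (4 * m - 2) [2 * m - 1, 2 * m - 1] ∧ SympPart [2 * m - 1, 2 * m - 1] ∧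
    Dominates [2 * m, 2 * m - 2] [2 * m - 1, 2 * m - 1] ∧
    ([2 * m, 2 * m - 2] ≠ [2 * m - 1, 2 * m - 1]) ∧
    ¬ ∃ q : List ℕ, IsPartitionOf (4 * m - 2) q ∧ SympPart q ∧
        Dominates [2 * m, 2 * m - 2] q ∧ Dominates q [2 * m - 1, 2 * m - 1] ∧
        q ≠ [2 * m, 2 * m - 2] ∧ q ≠ [2 * m - 1, 2 * m - 1] := by
  have hEven : SympPart [2 * m, 2 * m - 2] := sympPart_of_forall_even fun a ha => by
    rcases List.mem_pair.1 ha with rfl | rfl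
    exacts [even_two_mul m, ⟨m - 1, by omega⟩]
  refine ⟨isPartitionOf_pair_iff.2 (by omega), hEven, isPartitionOf_pair_iff.2 (by omega),
    sympPart_pair_self _, dominates_pair_iff.2 (by omega), by simp only [ne_eq, List.cons.injEq]; omega, ?_⟩
  rintro ⟨q, hq, -, hup, hlow, hne₁, hne₂⟩
  exact (eq_of_dominates_of_dominated hm hq hup hlow).elim hne₁ hne₂
end

section
/- Let κ be a field and n ≥ 1. For the nilpotent Jordan matrix x = J_{r+k} ⊕ J_{s−k} (direct sum of Jordan blocks of sizes r+k and s−k, with s ≤ r and 1 ≤ k < s), define x' to be the (r+s)×(r+s) matrix which is J_s ⊕ J_r plus a single extra entry 1 in position (k, s+1). Then x' has Jordan type [r+k, s−k], and for λ(t) = diag(t·I_s, I_r), the limit lim_{t→0} λ(t)·x'·λ(t)⁻¹ exists and equals J_s ⊕ J_r, which has Jordan type [r, s]. -/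
open Matrix Finset

namespace Stmt19Aux

variable {κ : Type*} [Field κ]

lemma single_inj {n : ℕ} : Function.Injective (fun i : Fin n => Pi.single i (1:κ)) := by
  intro a b hab
  by_contra hne
  have := congr_fun hab a
  simp [Pi.single_apply, hne] at this

open scoped Classical in
lemma rank_eq_card_single {n : ℕ} (M : Matrix (Fin n) (Fin n) κ)
    (h : ∀ j, Mᵀ j = 0 ∨ ∃ i, Mᵀ j = Pi.single i 1) :
    M.rank = (Finset.univ.filter fun i => ∃ j, Mᵀ j = Pi.single i (1:κ)).card := by
  rw [Matrix.rank_eq_finrank_span_cols]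
  set T : Finset (Fin n) := Finset.univ.filter fun i => ∃ j, Mᵀ j = Pi.single i (1:κ)
    with hT
  have hspan : Submodule.span κ (Set.range Mᵀ) =
      Submodule.span κ ((fun i => Pi.single i (1:κ)) '' (T : Set (Fin n))) := by
    apply le_antisymm
    · rw [Submodule.span_le]
      rintro - ⟨j, rfl⟩
      rcases h j with h0 | ⟨i, hi⟩
      · rw [h0]; exact Submodule.zero_mem _
      · rw [hi]
        refine Submodule.subset_span ⟨i, ?_, rfl⟩
        simp only [hT, Finset.coe_filter, Set.mem_setOf_eq]
        exact ⟨Finset.mem_univ i, j, hi⟩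
    · rw [Submodule.span_le]
      rintro - ⟨i, hi, rfl⟩
      simp only [hT, Finset.coe_filter, Set.mem_setOf_eq] at hi
      obtain ⟨-, j, hj⟩ := hi
      exact Submodule.subset_span ⟨j, hj⟩
  rw [show Set.range M.col = Set.range Mᵀ from rfl, hspan]
  have h2 : LinearIndependent κ (fun i : Fin n => Pi.single i (1:κ)) := by
    have := (Pi.basisFun κ (Fin n)).linearIndependent
    convert this using 1
    ext i j
    simp [Pi.basisFun_apply]
  have hli : LinearIndependent κ
      ((↑) : ((fun i => Pi.single i (1:κ)) '' (T : Set (Fin n))) → (Fin n → κ)) :=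
    LinearIndepOn.id_image (h2.linearIndepOn _)
  rw [finrank_span_set_eq_card hli, Set.toFinset_image,
    Finset.card_image_of_injective _ single_inj]
  simp

/-- generic: rank of a matrix with 0/1 entries, at most one 1 per column -/
lemma rank_card {n : ℕ} (M : Matrix (Fin n) (Fin n) κ) (P : ℕ → ℕ → Prop)
    [∀ i j, Decidable (P i j)]
    (hM : M = Matrix.of fun i j : Fin n => if P i.val j.val then (1:κ) else 0)
    (huniq : ∀ i i' j : ℕ, P i j → P i' j → i = i') :
    M.rank = ((Finset.range n).filter fun i => ∃ j < n, P i j).card := by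
  classical
  have hcol : ∀ (j : Fin n) (i : Fin n), P i.val j.val → Mᵀ j = Pi.single i 1 := by
    intro j i hi
    funext i'
    rw [hM]
    simp only [Matrix.transpose_apply, Matrix.of_apply, Pi.single_apply]
    by_cases h : P i'.val j.val
    · rw [if_pos h, if_pos (Fin.ext (huniq _ _ _ h hi))]
    · rw [if_neg h, if_neg]
      rintro rfl
      exact h hi
  have h : ∀ j, Mᵀ j = 0 ∨ ∃ i, Mᵀ j = Pi.single i 1 := by
    intro j
    by_cases hex : ∃ i : Fin n, P i.val j.val
    · obtain ⟨i, hi⟩ := hex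
      exact Or.inr ⟨i, hcol j i hi⟩
    · left
      funext i
      rw [hM]
      simp only [Matrix.transpose_apply, Matrix.of_apply, Pi.zero_apply]
      rw [if_neg]
      exact fun hP => hex ⟨i, hP⟩
  rw [rank_eq_card_single M h]
  have hiff : ∀ i : Fin n, (∃ j, Mᵀ j = Pi.single i 1) ↔ ∃ j : Fin n, P i.val j.val := by
    intro i
    constructor
    · rintro ⟨j, hj⟩
      refine ⟨j, ?_⟩
      have := congr_fun hj i
      rw [hM] at this
      simp only [Matrix.transpose_apply, Matrix.of_apply, Pi.single_eq_same] at this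
      by_contra hP
      rw [if_neg hP] at this
      exact zero_ne_one this
    · rintro ⟨j, hj⟩
      exact ⟨j, hcol j i hj⟩
  have heq : (Finset.univ.filter fun i : Fin n => ∃ j, Mᵀ j = Pi.single i (1:κ))
      = Finset.univ.filter fun i : Fin n => ∃ j : Fin n, P i.val j.val := by
    ext i
    simp only [Finset.mem_filter, hiff]
  rw [heq]
  rw [← Finset.card_image_of_injective _ Fin.val_injective]
  congr 1
  ext a
  simp only [Finset.mem_image, Finset.mem_filter, Finset.mem_univ, true_and,
    Finset.mem_range]
  constructor
  · rintro ⟨i, ⟨j, hj⟩, rfl⟩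
    exact ⟨i.isLt, j.val, j.isLt, hj⟩
  · rintro ⟨ha, j, hj, hP⟩
    exact ⟨⟨a, ha⟩, ⟨⟨j, hj⟩, hP⟩, rfl⟩

abbrev Qp (s k m i j : ℕ) : Prop :=
  (i + m = j ∧ ¬(i < s ∧ s ≤ j)) ∨ (i + m + s = j + k ∧ i < k ∧ s ≤ j)

abbrev Rp (s m i j : ℕ) : Prop := i + m = j ∧ ¬(i < s ∧ s ≤ j)

variable (κ) in
def Xm (r s k : ℕ) : Matrix (Fin (s + r)) (Fin (s + r)) κ := Matrix.of fun i j =>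
  (if i.val + 1 = j.val ∧ j.val ≠ s then 1 else 0) +
  (if i.val + 1 = k ∧ j.val = s then 1 else 0)

variable (κ) in
def Ym (r s : ℕ) : Matrix (Fin (s + r)) (Fin (s + r)) κ := Matrix.of fun i j =>
  if i.val + 1 = j.val ∧ j.val ≠ s then 1 else 0

variable {r s k : ℕ}

lemma mul_Xm (hk : 1 ≤ k) (hks : k < s)
    (N : Matrix (Fin (s + r)) (Fin (s + r)) κ) (i j : Fin (s + r)) :
    (N * Xm κ r s k) i j
      = (if h : 0 < j.val ∧ j.val ≠ s then
            N i ⟨j.val - 1, by omega⟩ else 0)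
      + (if j.val = s then N i ⟨k - 1, by omega⟩ else 0) := by
  rw [Matrix.mul_apply]
  have hterm : ∀ l : Fin (s + r), N i l * Xm κ r s k l j
      = (if l.val + 1 = j.val ∧ j.val ≠ s then N i l else 0)
      + (if l.val + 1 = k ∧ j.val = s then N i l else 0) := by
    intro l
    simp only [Xm, Matrix.of_apply, mul_add, mul_ite, mul_one, mul_zero]
  rw [Finset.sum_congr rfl fun l _ => hterm l, Finset.sum_add_distrib]
  congr 1
  · by_cases h : 0 < j.val ∧ j.val ≠ s
    · rw [dif_pos h, Finset.sum_eq_single (⟨j.val - 1, by omega⟩ : Fin (s + r))]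
      · rw [if_pos ⟨by simp; omega, h.2⟩]
      · intro l _ hl
        rw [if_neg]
        rintro ⟨h1, -⟩
        exact hl (Fin.ext (by simp; omega))
      · intro hmem; exact absurd (Finset.mem_univ _) hmem
    · rw [dif_neg h, Finset.sum_eq_zero]
      intro l _
      rw [if_neg]
      rintro ⟨h1, h2⟩
      omega
  · by_cases h : j.val = s
    · rw [if_pos h, Finset.sum_eq_single (⟨k - 1, by omega⟩ : Fin (s + r))]
      · rw [if_pos ⟨by simp; omega, h⟩]
      · intro l _ hl
        rw [if_neg]
        rintro ⟨h1, -⟩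
        exact hl (Fin.ext (by simp; omega))
      · intro hmem; exact absurd (Finset.mem_univ _) hmem
    · rw [if_neg h, Finset.sum_eq_zero]
      intro l _
      rw [if_neg]
      rintro ⟨-, h2⟩
      exact h h2

lemma mul_Ym (N : Matrix (Fin (s + r)) (Fin (s + r)) κ) (i j : Fin (s + r)) :
    (N * Ym κ r s) i j
      = if h : 0 < j.val ∧ j.val ≠ s then N i ⟨j.val - 1, by omega⟩ else 0 := by
  rw [Matrix.mul_apply]
  have hterm : ∀ l : Fin (s + r), N i l * Ym κ r s l j
      = if l.val + 1 = j.val ∧ j.val ≠ s then N i l else 0 := by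
    intro l
    simp only [Ym, Matrix.of_apply, mul_ite, mul_one, mul_zero]
  rw [Finset.sum_congr rfl fun l _ => hterm l]
  by_cases h : 0 < j.val ∧ j.val ≠ s
  · rw [dif_pos h, Finset.sum_eq_single (⟨j.val - 1, by omega⟩ : Fin (s + r))]
    · rw [if_pos ⟨by simp; omega, h.2⟩]
    · intro l _ hl
      rw [if_neg]
      rintro ⟨h1, -⟩
      exact hl (Fin.ext (by simp; omega))
    · intro hmem; exact absurd (Finset.mem_univ _) hmem
  · rw [dif_neg h, Finset.sum_eq_zero]
    intro l _
    rw [if_neg]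
    rintro ⟨h1, h2⟩
    omega

lemma pow_Xm (hk : 1 ≤ k) (hks : k < s) (m : ℕ) :
    (Xm κ r s k) ^ m
      = Matrix.of fun i j : Fin (s + r) => if Qp s k m i.val j.val then (1:κ) else 0 := by
  induction m with
  | zero =>
    ext i j
    simp only [pow_zero, Matrix.one_apply, Matrix.of_apply]
    refine if_congr ?_ rfl rfl
    rw [Fin.ext_iff]
    simp only [Qp]
    omega
  | succ m ih =>
    ext i j
    rw [pow_succ, ih, mul_Xm hk hks]
    by_cases hjs : j.val = s
    · rw [dif_neg (by omega), if_pos hjs, zero_add, Matrix.of_apply, Matrix.of_apply]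
      refine if_congr ?_ rfl rfl
      simp only [Qp]
      omega
    · by_cases hj0 : j.val = 0
      · rw [dif_neg (by omega), if_neg hjs, add_zero, Matrix.of_apply, if_neg]
        simp only [Qp]
        omega
      · rw [dif_pos ⟨by omega, hjs⟩, if_neg hjs, add_zero, Matrix.of_apply, Matrix.of_apply]
        refine if_congr ?_ rfl rfl
        simp only [Qp]
        omega

lemma pow_Ym (hk : 1 ≤ k) (hks : k < s) (m : ℕ) :
    (Ym κ r s) ^ m
      = Matrix.of fun i j : Fin (s + r) => if Rp s m i.val j.val then (1:κ) else 0 := by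
  induction m with
  | zero =>
    ext i j
    simp only [pow_zero, Matrix.one_apply, Matrix.of_apply]
    refine if_congr ?_ rfl rfl
    rw [Fin.ext_iff]
    simp only [Rp]
    omega
  | succ m ih =>
    ext i j
    rw [pow_succ, ih, mul_Ym]
    by_cases hjs : j.val = s
    · rw [dif_neg (by omega), Matrix.of_apply, if_neg]
      simp only [Rp]
      omega
    · by_cases hj0 : j.val = 0
      · rw [dif_neg (by omega), Matrix.of_apply, if_neg]
        simp only [Rp]
        omega
      · rw [dif_pos ⟨by omega, hjs⟩, Matrix.of_apply, Matrix.of_apply]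
        refine if_congr ?_ rfl rfl
        simp only [Rp]
        omega

lemma rank_pow_Xm (hk : 1 ≤ k) (hks : k < s) (hsr : s ≤ r) (m : ℕ) :
    ((Xm κ r s k) ^ m).rank = (r + k - m) + (s - k - m) := by
  rw [rank_card ((Xm κ r s k) ^ m) (Qp s k m) (pow_Xm hk hks m)
    (fun i i' j h h' => by simp only [Qp] at h h'; omega)]
  have hset : ((Finset.range (s + r)).filter fun i => ∃ j < s + r, Qp s k m i j)
      = Finset.range (max (s - m) (min k (k + r - m))) ∪
        Finset.Ico s (s + (r - m)) := by
    ext a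
    simp only [Finset.mem_filter, Finset.mem_range, Finset.mem_union, Finset.mem_Ico]
    constructor
    · rintro ⟨ha, j, hj, hQ⟩
      simp only [Qp] at hQ
      omega
    · intro h
      have ha : a < s + r := by omega
      refine ⟨ha, ?_⟩
      by_cases h1 : a + m < s
      · exact ⟨a + m, by omega, Or.inl ⟨rfl, by omega⟩⟩
      · by_cases h2 : s ≤ a
        · exact ⟨a + m, by omega, Or.inl ⟨rfl, by omega⟩⟩
        · exact ⟨a + m + s - k, by omega, Or.inr ⟨by omega, by omega, by omega⟩⟩
  rw [hset, Finset.card_union_of_disjoint, Finset.card_range, Nat.card_Ico]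
  · omega
  · rw [Finset.disjoint_left]
    intro a ha ha'
    simp only [Finset.mem_range] at ha
    simp only [Finset.mem_Ico] at ha'
    omega

lemma rank_pow_Ym (hk : 1 ≤ k) (hks : k < s) (hsr : s ≤ r) (m : ℕ) :
    ((Ym κ r s) ^ m).rank = (r - m) + (s - m) := by
  rw [rank_card ((Ym κ r s) ^ m) (Rp s m) (pow_Ym hk hks m)
    (fun i i' j h h' => by simp only [Rp] at h h'; omega)]
  have hset : ((Finset.range (s + r)).filter fun i => ∃ j < s + r, Rp s m i j)
      = Finset.range (s - m) ∪ Finset.Ico s (s + (r - m)) := by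
    ext a
    simp only [Finset.mem_filter, Finset.mem_range, Finset.mem_union, Finset.mem_Ico]
    constructor
    · rintro ⟨ha, j, hj, hQ⟩
      simp only [Rp] at hQ
      omega
    · intro h
      have ha : a < s + r := by omega
      exact ⟨ha, a + m, by omega, rfl, by omega⟩
  rw [hset, Finset.card_union_of_disjoint, Finset.card_range, Nat.card_Ico]
  · omega
  · rw [Finset.disjoint_left]
    intro a ha ha'
    simp only [Finset.mem_range] at ha
    simp only [Finset.mem_Ico] at ha'
    omega

end Stmt19Aux

/-- J_s ⊕ J_r plus a single extra entry 1 in position (k, s+1) (1-indexed): Jordan type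
[r+k, s−k]; conjugating by λ(t) = diag(t·I_s, I_r) gives (J_s ⊕ J_r) + t·(extra entry),
so the limit as t → 0 is J_s ⊕ J_r, of Jordan type [r, s].  Jordan types are expressed
through ranks of powers. -/
theorem stmt19 (κ : Type*) [Field κ] (r s k : ℕ)
    (hk : 1 ≤ k) (hks : k < s) (hsr : s ≤ r) :
    let x' : Matrix (Fin (s + r)) (Fin (s + r)) κ := Matrix.of fun i j =>
      (if i.val + 1 = j.val ∧ j.val ≠ s then 1 else 0) +
      (if i.val + 1 = k ∧ j.val = s then 1 else 0)
    let y : Matrix (Fin (s + r)) (Fin (s + r)) κ := Matrix.of fun i j =>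
      if i.val + 1 = j.val ∧ j.val ≠ s then 1 else 0
    let z : Matrix (Fin (s + r)) (Fin (s + r)) κ := Matrix.of fun i j =>
      if i.val + 1 = k ∧ j.val = s then 1 else 0
    (∀ jj : ℕ, (x' ^ jj).rank = (r + k - jj) + (s - k - jj)) ∧
    (∀ t : κ, t ≠ 0 →
      (Matrix.diagonal fun i : Fin (s + r) => if i.val < s then t else 1) * x' *
        (Matrix.diagonal fun i : Fin (s + r) => if i.val < s then t else 1)⁻¹
        = y + t • z) ∧
    (∀ jj : ℕ, (y ^ jj).rank = (r - jj) + (s - jj)) := by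
  intro x' y z
  have hx : x' = Stmt19Aux.Xm κ r s k := rfl
  have hy : y = Stmt19Aux.Ym κ r s := rfl
  refine ⟨?_, ?_, ?_⟩
  · intro jj
    rw [hx, Stmt19Aux.rank_pow_Xm hk hks hsr jj]
  · intro t ht
    have hD : (Matrix.diagonal fun i : Fin (s + r) => if i.val < s then t else 1)⁻¹
        = Matrix.diagonal fun i : Fin (s + r) => if i.val < s then t⁻¹ else 1 := by
      apply Matrix.inv_eq_right_inv
      rw [Matrix.diagonal_mul_diagonal]
      have hfun : (fun i : Fin (s + r) =>
          (if i.val < s then t else 1) * if i.val < s then t⁻¹ else 1) = fun _ => (1:κ) := by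
        funext i
        by_cases h : i.val < s
        · rw [if_pos h, if_pos h, mul_inv_cancel₀ ht]
        · rw [if_neg h, if_neg h, mul_one]
      rw [hfun, Matrix.diagonal_one]
    rw [hD]
    ext i j
    rw [Matrix.mul_diagonal, Matrix.diagonal_mul]
    simp only [x', y, z, Matrix.of_apply, Matrix.add_apply, Matrix.smul_apply, smul_eq_mul]
    split_ifs <;>
      first
        | (exfalso; omega)
        | (field_simp; done)
        | (simp [ht])
  · intro jj
    rw [hy, Stmt19Aux.rank_pow_Ym hk hks hsr jj]
end
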